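/- arXiv:1302.2535 — 5 statements merged into one kernel-verified Lean document; each statement's English description precedes it below -/
import Mathlib

section
/- Let A be a unital complex topological algebra whose unit group is open, and let U be a balanced (circled) open neighborhood of 0 such that 1 + U consists of invertible elements. Then every algebra homomorphism χ : A → ℂ with χ(1) = 1 satisfies |χ(u)| < 1 for all u ∈ U. In particular, every such character is continuous. -/
/-!
If `‖χ u‖ ≥ 1` for some `u ∈ U`, then `γ = -(χ u)⁻¹` has `‖γ‖ ≤ 1`, so `γ • u ∈ U` by balancedness,
and `1 + γ • u` is a unit that `χ` sends to `0`, which is impossible. Thus `‖χ‖ < 1` on the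
neighbourhood `U` of `0`, and a linear functional bounded on a neighbourhood of `0` is continuous.
-/

open Filter Topology

theorem LinearMap.continuous_of_forall_norm_lt {𝕜 E F : Type*} [NontriviallyNormedField 𝕜]
    [AddCommGroup E] [Module 𝕜 E] [TopologicalSpace E] [IsTopologicalAddGroup E]
    [ContinuousConstSMul 𝕜 E] [SeminormedAddCommGroup F] [NormedSpace 𝕜 F]
    (f : E →ₗ[𝕜] F) {U : Set E} (hU : U ∈ 𝓝 0) {r : ℝ} (hf : ∀ x ∈ U, ‖f x‖ < r) :
    Continuous f := by
  have hball : ((normSeminorm 𝕜 F).comp f).ball 0 r ∈ 𝓝 (0 : E) :=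
    mem_of_superset hU fun x hx => by simpa using hf x hx
  exact (norm_withSeminorms 𝕜 F).continuous_of_continuous_comp f fun _ => Seminorm.continuous hball

theorem AlgHom.norm_apply_lt_one_of_balanced {𝕜 A : Type*} [NormedField 𝕜] [Ring A]
    [Algebra 𝕜 A] {U : Set A} (hbal : Balanced 𝕜 U) (hinv : ∀ u ∈ U, IsUnit (1 + u))
    (χ : A →ₐ[𝕜] 𝕜) {u : A} (hu : u ∈ U) : ‖χ u‖ < 1 := by
  by_contra! hle
  have hne : χ u ≠ 0 := norm_pos_iff.mp (one_pos.trans_le hle)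
  set γ : 𝕜 := -(χ u)⁻¹
  have hγ : ‖γ‖ ≤ 1 := by simpa [γ] using inv_le_one_of_one_le₀ hle
  have hunit : IsUnit (χ (1 + γ • u)) := (hinv _ (hbal γ hγ (Set.smul_mem_smul_set hu))).map χ
  have hzero : χ (1 + γ • u) = 0 := by
    simp [γ, map_add, map_smul, inv_mul_cancel₀ hne]
  exact hunit.ne_zero hzero

theorem stmt1_general {A : Type*} [Ring A] [Algebra ℂ A] [TopologicalSpace A] [IsTopologicalRing A]
    (U : Set A) (hUopen : IsOpen U) (hU0 : (0 : A) ∈ U) (hbal : Balanced ℂ U)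
    (hinv : ∀ u ∈ U, IsUnit (1 + u))
    (χ : A →ₐ[ℂ] ℂ) :
    (∀ u ∈ U, ‖χ u‖ < 1) ∧ Continuous fun a => χ a := by
  have hbound : ∀ u ∈ U, ‖χ u‖ < 1 := fun _ => χ.norm_apply_lt_one_of_balanced hbal hinv
  exact ⟨hbound, χ.toLinearMap.continuous_of_forall_norm_lt (hUopen.mem_nhds hU0) hbound⟩

/-- Let `A` be a unital complex topological algebra with open unit group, and `U` a
balanced open neighborhood of `0` with `1 + U` consisting of invertible elements. Then
every unital algebra homomorphism `χ : A → ℂ` satisfies `|χ(u)| < 1` for `u ∈ U`; in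
particular every such character is continuous. -/
theorem stmt1 {A : Type*} [Ring A] [Algebra ℂ A] [TopologicalSpace A] [IsTopologicalRing A]
    (hopen : IsOpen {a : A | IsUnit a})
    (U : Set A) (hUopen : IsOpen U) (hU0 : (0 : A) ∈ U) (hbal : Balanced ℂ U)
    (hinv : ∀ u ∈ U, IsUnit (1 + u))
    (χ : A →ₐ[ℂ] ℂ) :
    (∀ u ∈ U, ‖χ u‖ < 1) ∧ Continuous fun a => χ a :=
  stmt1_general U hUopen hU0 hbal hinv χ
end

section
/- Let k be a Lie algebra over a commutative ring R with k = [k, k] (k is perfect), and let A be a commutative (possibly non-unital) R-algebra with the property that for every a ∈ A there exists e ∈ A with ea = a. Then the Lie algebra k ⊗_R A, with bracket [x ⊗ a, y ⊗ b] = [x, y] ⊗ ab, is perfect. -/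
/-! Since `e * a = a`, the pure tensor `⁅u, v⁆ ⊗ a` is the bracket of `u ⊗ e` and `v ⊗ a`.
As `k` is spanned by brackets, linearity of `x ↦ x ⊗ a` gives every `x ⊗ a`, and pure tensors
span `k ⊗ A`. -/

open TensorProduct

theorem TensorProduct.mem_of_forall_tmul_mem {R M N : Type*} [CommSemiring R]
    [AddCommMonoid M] [AddCommMonoid N] [Module R M] [Module R N]
    {S : Submodule R (M ⊗[R] N)} (h : ∀ m n, m ⊗ₜ[R] n ∈ S) (z : M ⊗[R] N) : z ∈ S := by
  have hspan : Submodule.span R {t | ∃ m n, m ⊗ₜ[R] n = t} ≤ S :=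
    Submodule.span_le.mpr <| by rintro _ ⟨m, n, rfl⟩; exact h m n
  exact hspan (span_tmul_eq_top R M N ▸ Submodule.mem_top)

section

variable {R k A : Type*} [CommRing R] [LieRing k] [LieAlgebra R k]
  [NonUnitalCommRing A] [Module R A]
  {B : k ⊗[R] A →ₗ[R] k ⊗[R] A →ₗ[R] k ⊗[R] A}

theorem lie_tmul_mem_span_image
    (hB : ∀ (x y : k) (a b : A), B (x ⊗ₜ[R] a) (y ⊗ₜ[R] b) = ⁅x, y⁆ ⊗ₜ[R] (a * b))
    {a e : A} (he : e * a = a) (u v : k) :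
    ⁅u, v⁆ ⊗ₜ[R] a ∈ Submodule.span R {w | ∃ u v, w = B u v} :=
  Submodule.subset_span ⟨u ⊗ₜ e, v ⊗ₜ a, by rw [hB, he]⟩

theorem tmul_mem_span_image_of_mem_span_lie
    (hB : ∀ (x y : k) (a b : A), B (x ⊗ₜ[R] a) (y ⊗ₜ[R] b) = ⁅x, y⁆ ⊗ₜ[R] (a * b))
    {a e : A} (he : e * a = a) {x : k}
    (hx : x ∈ Submodule.span R {z : k | ∃ u v : k, z = ⁅u, v⁆}) :
    x ⊗ₜ[R] a ∈ Submodule.span R {w | ∃ u v, w = B u v} := by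
  have hspan : Submodule.span R {z : k | ∃ u v : k, z = ⁅u, v⁆} ≤
      (Submodule.span R {w | ∃ u v, w = B u v}).comap ((TensorProduct.mk R k A).flip a) :=
    Submodule.span_le.mpr <| by
      rintro _ ⟨u, v, rfl⟩
      exact lie_tmul_mem_span_image hB he u v
  exact hspan hx

end

theorem stmt3_general {R k A : Type*} [CommRing R] [LieRing k] [LieAlgebra R k]
    [NonUnitalCommRing A] [Module R A]
    (hperf : ∀ x : k, x ∈ Submodule.span R {z : k | ∃ u v : k, z = ⁅u, v⁆})
    (hA : ∀ a : A, ∃ e : A, e * a = a)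
    (B : TensorProduct R k A →ₗ[R] TensorProduct R k A →ₗ[R] TensorProduct R k A)
    (hB : ∀ (x y : k) (a b : A), B (x ⊗ₜ[R] a) (y ⊗ₜ[R] b) = ⁅x, y⁆ ⊗ₜ[R] (a * b)) :
    ∀ z : TensorProduct R k A,
      z ∈ Submodule.span R {w : TensorProduct R k A | ∃ u v, w = B u v} :=
  TensorProduct.mem_of_forall_tmul_mem fun x a ↦
    tmul_mem_span_image_of_mem_span_lie hB (hA a).choose_spec (hperf x)

/-- If `k` is a perfect Lie algebra over a commutative ring `R` and `A` is a commutative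
(possibly non-unital) `R`-algebra such that every `a ∈ A` admits `e` with `e * a = a`,
then the Lie algebra `k ⊗_R A` with bracket `[x ⊗ a, y ⊗ b] = [x,y] ⊗ ab` is perfect.
The bracket is encoded by a bilinear map `B` characterized on pure tensors, and
perfectness of a Lie algebra is expressed as: every element lies in the linear span
of brackets. -/
theorem stmt3 {R k A : Type*} [CommRing R] [LieRing k] [LieAlgebra R k]
    [NonUnitalCommRing A] [Module R A] [SMulCommClass R A A] [IsScalarTower R A A]
    (hperf : ∀ x : k, x ∈ Submodule.span R {z : k | ∃ u v : k, z = ⁅u, v⁆})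
    (hA : ∀ a : A, ∃ e : A, e * a = a)
    (B : TensorProduct R k A →ₗ[R] TensorProduct R k A →ₗ[R] TensorProduct R k A)
    (hB : ∀ (x y : k) (a b : A), B (x ⊗ₜ[R] a) (y ⊗ₜ[R] b) = ⁅x, y⁆ ⊗ₜ[R] (a * b)) :
    ∀ z : TensorProduct R k A,
      z ∈ Submodule.span R {w : TensorProduct R k A | ∃ u v, w = B u v} :=
  stmt3_general hperf hA B hB
end

section
/- Let A be a commutative unital ℂ-algebra, N ∈ ℕ, and suppose φ : A → ℂ is of the form φ(a) = ψ(a ⊗ ⋯ ⊗ a) (N-fold) for some linear map ψ : Sym^N(A) → ℂ, and φ(ab) = φ(a)φ(b) for all a, b ∈ A. Then ψ is an algebra homomorphism on Sym^N(A), where Sym^N(A) carries the commutative algebra structure with (a₁ ∨ ⋯ ∨ a_N)(b₁ ∨ ⋯ ∨ b_N) determined by factorwise multiplication of the underlying symmetric tensors. -/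
/-!
On the spanning set of diagonal tensors `μ(a,…,a)` the functional `ψ` is multiplicative, since
`μ(a,…,a) μ(b,…,b) = μ(ab,…,ab)` and `ψ(μ(a,…,a)) = φ(a)`. Both `(x, y) ↦ ψ(xy)` and
`(x, y) ↦ ψ(x) ψ(y)` are bilinear, so they agree everywhere.
-/

theorem LinearMap.map_mul_of_span_eq_top {R S : Type*} [CommSemiring R]
    [NonUnitalNonAssocSemiring S] [Module R S] [SMulCommClass R S S] [IsScalarTower R S S]
    (ψ : S →ₗ[R] R) {G : Set S} (hG : Submodule.span R G = ⊤)
    (hψG : ∀ g ∈ G, ∀ h ∈ G, ψ (g * h) = ψ g * ψ h) (x y : S) :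
    ψ (x * y) = ψ x * ψ y := by
  have hx : x ∈ Submodule.span R G := hG ▸ Submodule.mem_top
  have hy : y ∈ Submodule.span R G := hG ▸ Submodule.mem_top
  induction hx, hy using Submodule.span_induction₂ with
  | mem_mem g h hg hh => exact hψG g hg h hh
  | zero_left | zero_right => simp
  | add_left _ _ _ _ _ _ h₁ h₂ => simp only [add_mul, map_add, h₁, h₂]
  | add_right _ _ _ _ _ _ h₁ h₂ => simp only [mul_add, map_add, h₁, h₂]
  | smul_left _ _ _ _ _ h => simp only [smul_mul_assoc, map_smul, h, smul_eq_mul, mul_assoc]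
  | smul_right _ _ _ _ _ h => simp only [mul_smul_comm, map_smul, h, smul_eq_mul, mul_left_comm]

theorem stmt6_general {A S : Type*} [CommRing A] [Algebra ℂ A] [CommRing S] [Algebra ℂ S]
    (N : ℕ)
    (μ : MultilinearMap ℂ (fun _ : Fin N => A) S)
    (hfact : ∀ v w : Fin N → A, μ v * μ w = μ (fun i => v i * w i))
    (hspan : Submodule.span ℂ {s : S | ∃ a : A, s = μ (fun _ => a)} = ⊤)
    (ψ : S →ₗ[ℂ] ℂ) (φ : A → ℂ)
    (hφ : ∀ a : A, φ a = ψ (μ (fun _ => a)))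
    (hmul : ∀ a b : A, φ (a * b) = φ a * φ b) :
    ∀ x y : S, ψ (x * y) = ψ x * ψ y := by
  refine ψ.map_mul_of_span_eq_top hspan ?_
  rintro _ ⟨a, rfl⟩ _ ⟨b, rfl⟩
  rw [hfact, ← hφ a, ← hφ b, ← hφ (a * b), hmul]

/-- Let `A` be a commutative unital `ℂ`-algebra and let `Sym^N(A)` be presented
abstractly as a commutative `ℂ`-algebra `S` together with a symmetric `N`-multilinear map
`μ : A^N → S` multiplying factorwise, whose diagonal values `a^{∨N} = μ(a,…,a)` span `S`.
If `ψ : S → ℂ` is linear and `φ(a) := ψ(a ⊗ ⋯ ⊗ a)` satisfies `φ(ab) = φ(a)φ(b)`, then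
`ψ` is multiplicative, i.e. an algebra homomorphism on `Sym^N(A)`. -/
theorem stmt6 {A S : Type*} [CommRing A] [Algebra ℂ A] [CommRing S] [Algebra ℂ S]
    (N : ℕ)
    (μ : MultilinearMap ℂ (fun _ : Fin N => A) S)
    (hsym : ∀ (σ : Equiv.Perm (Fin N)) (v : Fin N → A), μ (v ∘ σ) = μ v)
    (hfact : ∀ v w : Fin N → A, μ v * μ w = μ (fun i => v i * w i))
    (hspan : Submodule.span ℂ {s : S | ∃ a : A, s = μ (fun _ => a)} = ⊤)
    (ψ : S →ₗ[ℂ] ℂ) (φ : A → ℂ)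
    (hφ : ∀ a : A, φ a = ψ (μ (fun _ => a)))
    (hmul : ∀ a b : A, φ (a * b) = φ a * φ b) :
    ∀ x y : S, ψ (x * y) = ψ x * ψ y :=
  stmt6_general N μ hfact hspan ψ φ hφ hmul
end

section
/- Let X be a locally compact Hausdorff space. Then C₀(X, ℝ) admits a sequence (δ_n) with 0 ≤ δ_n ≤ 1 that is an approximate identity (δ_n f → f in the sup norm for every f ∈ C₀(X)) if and only if X is σ-compact (countable at infinity). -/
open Set Filter Topology

/-- For a locally compact Hausdorff space `X`, the algebra `C₀(X, ℝ)` admits a sequence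
`(δ_n)` with `0 ≤ δ_n ≤ 1` which is an approximate identity (i.e. `δ_n f → f` in the sup
norm for every `f ∈ C₀(X)`) if and only if `X` is σ-compact (countable at infinity). -/
theorem stmt13 (X : Type*) [TopologicalSpace X] [LocallyCompactSpace X] [T2Space X] :
    (∃ δ : ℕ → ZeroAtInftyContinuousMap X ℝ,
      (∀ n x, 0 ≤ δ n x ∧ δ n x ≤ 1) ∧
      ∀ f : ZeroAtInftyContinuousMap X ℝ, ∀ ε > 0, ∃ N : ℕ, ∀ n ≥ N, ∀ x,
        |δ n x * f x - f x| ≤ ε) ↔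
    SigmaCompactSpace X := by
  constructor
  · rintro ⟨δ, hδ01, happ⟩
    -- X = ⋃ n, {x | 1/2 ≤ δ n x}, each compact.
    set K : ℕ → Set X := fun n => {x | (1:ℝ)/2 ≤ δ n x} with hK
    have hKc : ∀ n, IsCompact (K n) := by
      intro n
      have hclosed : IsClosed (K n) :=
        isClosed_le continuous_const (map_continuous (δ n))
      have h0 : Tendsto (δ n) (cocompact X) (𝓝 0) := zero_at_infty (δ n)
      have : {x : X | (δ n) x ∈ Metric.ball (0:ℝ) (1/2)} ∈ cocompact X :=
        h0 (Metric.ball_mem_nhds 0 (by norm_num))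
      rcases mem_cocompact.mp this with ⟨t, htc, hts⟩
      refine htc.of_isClosed_subset hclosed ?_
      intro x hx
      by_contra hxt
      have := hts hxt
      simp only [mem_setOf_eq, Metric.mem_ball, Real.dist_eq, sub_zero] at this
      have hx' : (1:ℝ)/2 ≤ δ n x := hx
      have : |(δ n) x| < 1/2 := this
      nlinarith [abs_nonneg ((δ n) x), le_abs_self ((δ n) x)]
    refine ⟨⟨K, hKc, ?_⟩⟩
    rw [eq_univ_iff_forall]
    intro x
    -- find f ∈ C₀ with f x = 1
    obtain ⟨f, hf1, -, hfc, hf01⟩ :=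
      exists_continuous_one_zero_of_isCompact (isCompact_singleton (x := x))
        isClosed_empty (disjoint_empty _)
    set g : ZeroAtInftyContinuousMap X ℝ := ⟨f, hfc.is_zero_at_infty⟩ with hg
    obtain ⟨N, hN⟩ := happ g (1/2) (by norm_num)
    have hfx : g x = 1 := hf1 rfl
    have := hN N le_rfl x
    rw [hfx, mul_one] at this
    refine mem_iUnion.mpr ⟨N, ?_⟩
    have : |δ N x - 1| ≤ 1/2 := this
    have := abs_le.mp this
    simp only [K, mem_setOf_eq]
    linarith [this.1]
  · intro hsc
    obtain ⟨E⟩ : Nonempty (CompactExhaustion X) := ⟨CompactExhaustion.choice X⟩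
    -- δ n : 1 on E n, compact support, values in [0,1]
    have hδ : ∀ n : ℕ, ∃ f : C(X, ℝ), EqOn f 1 (E n) ∧ HasCompactSupport f ∧
        ∀ x, f x ∈ Icc (0:ℝ) 1 := by
      intro n
      obtain ⟨f, h1, -, hc, h01⟩ :=
        exists_continuous_one_zero_of_isCompact (E.isCompact n) isClosed_empty
          (disjoint_empty _)
      exact ⟨f, h1, hc, h01⟩
    choose φ hφ1 hφc hφ01 using hδ
    refine ⟨fun n => ⟨φ n, (hφc n).is_zero_at_infty⟩, fun n x => (hφ01 n x), ?_⟩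
    intro f ε hε
    -- the set {|f| ≥ ε} is compact, contained in some E N
    have h0 : Tendsto f (cocompact X) (𝓝 0) := zero_at_infty f
    have hmem : {x : X | f x ∈ Metric.ball (0:ℝ) ε} ∈ cocompact X :=
      h0 (Metric.ball_mem_nhds 0 hε)
    rcases mem_cocompact.mp hmem with ⟨t, htc, hts⟩
    have hS : IsCompact {x : X | ε ≤ |f x|} := by
      refine htc.of_isClosed_subset
        (isClosed_le continuous_const (map_continuous f).abs) ?_
      intro x hx
      by_contra hxt
      have := hts hxt
      simp only [mem_setOf_eq, Metric.mem_ball, Real.dist_eq, sub_zero] at this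
      exact absurd hx (by simp [mem_setOf_eq]; linarith)
    obtain ⟨N, hNs⟩ := E.exists_superset_of_isCompact hS
    refine ⟨N, fun n hn x => ?_⟩
    show |(φ n) x * f x - f x| ≤ ε
    by_cases hx : x ∈ E n
    · rw [show (φ n) x = 1 from hφ1 n hx]
      simpa using hε.le
    · -- then x ∉ E N ⊇ {|f| ≥ ε}, so |f x| < ε
      have hxN : x ∉ {x : X | ε ≤ |f x|} := fun h => hx (E.subset hn (hNs h))
      have hfx : |f x| ≤ ε := le_of_not_ge (by simpa [mem_setOf_eq] using hxN)
      have h01 := hφ01 n x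
      calc |(φ n) x * f x - f x| = |(φ n) x - 1| * |f x| := by
            rw [← abs_mul]; ring_nf
          _ ≤ 1 * ε := by
            apply mul_le_mul _ hfx (abs_nonneg _) zero_le_one
            exact abs_le.mpr ⟨by linarith [h01.1], by linarith [h01.2]⟩
          _ = ε := one_mul ε
end

section
/- Let f ∈ C^k([0,1], ℂ) with f^{(j)}(0) = 0 for all 0 ≤ j ≤ k. Then |f(x)| ≤ (1/k!) x^k ‖f^{(k)}‖_∞ for all x ∈ [0,1]. Consequently, for any sequence x_n = 1/(n+1)² and k ≥ 1, the map f ↦ (f(x_n))_{n∈ℕ} is a continuous algebra homomorphism from the Banach algebra C₀^k([0,1], ℂ) (with the C^k-norm) into ℓ¹(ℕ, ℂ). -/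
/-!
If `f` and its first `k - 1` derivatives vanish at `a` and `‖f⁽ᵏ⁾‖ ≤ M` on `[a, b]`, then by
induction on `j` the fencing form of the mean value theorem gives
`‖f⁽ᵏ⁻ʲ⁾ x‖ ≤ M (x - a)ʲ / j!`: the derivative in `x` of the bound for `j` is the bound for
`j - 1`. At the points `1 / (n + 1)²` of `[0, 1]` the case `j = k` gives
`‖f (1 / (n + 1)²)‖ ≤ M / (k! (n + 1)²ᵏ)`, a summable majorant as soon as `k ≥ 1`.
-/

open Set Nat

lemma hasDerivAt_sub_pow_succ_div_factorial (a y : ℝ) (j : ℕ) :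
    HasDerivAt (fun t => (t - a) ^ (j + 1) / (j + 1)!) ((y - a) ^ j / j !) y := by
  refine ((((hasDerivAt_id y).sub_const a).pow (j + 1)).div_const ((j + 1)! : ℝ)).congr_deriv ?_
  simp [factorial_succ]
  field_simp

section VanishingAtLeftEndpoint

variable {E : Type*} [NormedAddCommGroup E] [NormedSpace ℝ E] {f : ℝ → E} {a b M : ℝ} {k : ℕ}

lemma hasDerivWithinAt_Ici_iteratedDerivWithin_Icc {m : ℕ} (hab : a < b)
    (hf : ContDiffOn ℝ k f (Icc a b)) (hm : m < k) {y : ℝ} (hy : y ∈ Ico a b) :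
    HasDerivWithinAt (iteratedDerivWithin m f (Icc a b))
      (iteratedDerivWithin (m + 1) f (Icc a b) y) (Ici y) y := by
  have hdiff := hf.differentiableOn_iteratedDerivWithin (by exact_mod_cast hm)
    (uniqueDiffOn_Icc hab) y (Ico_subset_Icc_self hy)
  rw [iteratedDerivWithin_succ]
  exact hdiff.hasDerivWithinAt.mono_of_mem_nhdsWithin (Icc_mem_nhdsGE_of_mem hy)

lemma norm_iteratedDerivWithin_le_of_iteratedDerivWithin_eq_zero (hab : a < b)
    (hf : ContDiffOn ℝ k f (Icc a b)) (h0 : ∀ j < k, iteratedDerivWithin j f (Icc a b) a = 0)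
    (hM : ∀ x ∈ Icc a b, ‖iteratedDerivWithin k f (Icc a b) x‖ ≤ M) :
    ∀ j m, m + j = k → ∀ x ∈ Icc a b,
      ‖iteratedDerivWithin m f (Icc a b) x‖ ≤ M * ((x - a) ^ j / j !) := by
  intro j
  induction j with
  | zero =>
    rintro m rfl x hx
    simpa using hM x hx
  | succ j ih =>
    intro m hmj x hx
    have hmk : m < k := by omega
    have hcont : ContinuousOn (iteratedDerivWithin m f (Icc a b)) (Icc a b) :=
      hf.continuousOn_iteratedDerivWithin (by exact_mod_cast hmk.le) (uniqueDiffOn_Icc hab)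
    have hleft : ‖iteratedDerivWithin m f (Icc a b) a‖ ≤ M * ((a - a) ^ (j + 1) / (j + 1)!) := by
      simp [h0 m hmk]
    exact image_norm_le_of_norm_deriv_right_le_deriv_boundary hcont
      (fun y hy => hasDerivWithinAt_Ici_iteratedDerivWithin_Icc hab hf hmk hy) hleft
      (fun y => (hasDerivAt_sub_pow_succ_div_factorial a y j).const_mul M)
      (fun y hy => ih (m + 1) (by omega) y (Ico_subset_Icc_self hy)) hx

lemma norm_le_of_iteratedDerivWithin_eq_zero (hab : a < b)
    (hf : ContDiffOn ℝ k f (Icc a b)) (h0 : ∀ j < k, iteratedDerivWithin j f (Icc a b) a = 0)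
    (hM : ∀ x ∈ Icc a b, ‖iteratedDerivWithin k f (Icc a b) x‖ ≤ M) {x : ℝ} (hx : x ∈ Icc a b) :
    ‖f x‖ ≤ M * ((x - a) ^ k / k !) := by
  simpa using norm_iteratedDerivWithin_le_of_iteratedDerivWithin_eq_zero hab hf h0 hM k 0
    (zero_add k) x hx

end VanishingAtLeftEndpoint

lemma summable_one_div_nat_add_one_pow {p : ℕ} (hp : 2 ≤ p) :
    Summable fun n : ℕ => 1 / ((n : ℝ) + 1) ^ p := by
  have := (summable_nat_add_iff 1).mpr (Real.summable_one_div_nat_pow.mpr hp)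
  exact_mod_cast this

lemma one_div_nat_add_one_sq_mem_Icc (n : ℕ) : 1 / ((n : ℝ) + 1) ^ 2 ∈ Icc (0 : ℝ) 1 :=
  ⟨by positivity, div_le_one_of_le₀ (one_le_pow₀ (by linarith [n.cast_nonneg (α := ℝ)]))
    (by positivity)⟩

/-- Let `f ∈ C^k([0,1], ℂ)` with `f^{(j)}(0) = 0` for `0 ≤ j ≤ k`. Then
`|f(x)| ≤ (1/k!) xᵏ ‖f^{(k)}‖_∞` on `[0,1]`. Consequently, for `k ≥ 1` and the sequence
`x_n = 1/(n+1)²`, the evaluation map `f ↦ (f(x_n))_n` lands in `ℓ¹(ℕ, ℂ)` and is bounded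
(its norm is controlled by `(1/k!) Σ_n (n+1)^{-2k}` times the `C^k`-norm); hence it is a
continuous algebra homomorphism `C₀^k([0,1], ℂ) → ℓ¹(ℕ, ℂ)` (multiplicativity of
pointwise evaluation being automatic). -/
theorem stmt19 (k : ℕ) (f : ℝ → ℂ)
    (hf : ContDiffOn ℝ k f (Set.Icc 0 1))
    (h0 : ∀ j ≤ k, iteratedDerivWithin j f (Set.Icc 0 1) 0 = 0)
    (M : ℝ)
    (hM : ∀ x ∈ Set.Icc (0 : ℝ) 1, ‖iteratedDerivWithin k f (Set.Icc 0 1) x‖ ≤ M) :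
    (∀ x ∈ Set.Icc (0 : ℝ) 1, ‖f x‖ ≤ (1 / (Nat.factorial k : ℝ)) * x ^ k * M) ∧
    (1 ≤ k →
      Summable (fun n : ℕ => ‖f (1 / ((n : ℝ) + 1) ^ 2)‖) ∧
      ∑' n : ℕ, ‖f (1 / ((n : ℝ) + 1) ^ 2)‖ ≤
        ((1 / (Nat.factorial k : ℝ)) * ∑' n : ℕ, 1 / ((n : ℝ) + 1) ^ (2 * k)) * M) := by
  have hbound : ∀ x ∈ Icc (0 : ℝ) 1, ‖f x‖ ≤ 1 / k ! * x ^ k * M := fun x hx =>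
    (norm_le_of_iteratedDerivWithin_eq_zero zero_lt_one hf (fun j hj => h0 j hj.le) hM hx).trans_eq
      (by ring)
  refine ⟨hbound, fun hk => ?_⟩
  have hterm (n : ℕ) :
      ‖f (1 / ((n : ℝ) + 1) ^ 2)‖ ≤ 1 / k ! * (1 / ((n : ℝ) + 1) ^ (2 * k)) * M := by
    simpa [div_pow, ← pow_mul] using hbound _ (one_div_nat_add_one_sq_mem_Icc n)
  have hmajorant := ((summable_one_div_nat_add_one_pow (by omega : 2 ≤ 2 * k)).mul_left
    (1 / k ! : ℝ)).mul_right M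
  have hsummable := hmajorant.of_nonneg_of_le (fun _ => norm_nonneg _) hterm
  refine ⟨hsummable, ?_⟩
  calc ∑' n : ℕ, ‖f (1 / ((n : ℝ) + 1) ^ 2)‖
      ≤ ∑' n : ℕ, 1 / k ! * (1 / ((n : ℝ) + 1) ^ (2 * k)) * M :=
        hsummable.tsum_le_tsum hterm hmajorant
    _ = (1 / k ! * ∑' n : ℕ, 1 / ((n : ℝ) + 1) ^ (2 * k)) * M := by
        rw [tsum_mul_right, tsum_mul_left]
end
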